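/- arXiv:math-ph/0112051 — 5 statements merged into one kernel-verified Lean document; each statement's English description precedes it below -/
import Mathlib

section
/- Let ν(λ, λ₁, λ₂) = (1/2)(λ + (λ₁+λ₂)/2 + √((λ-λ₁)(λ-λ₂))) for an analytic branch of the square root. Then ν satisfies ∂ν/∂λ₁ = -α₁/(ν - γ₁) and ∂ν/∂λ₂ = -α₂/(ν - γ₂), where γ₁ = (3λ₁+λ₂)/4, γ₂ = (λ₁+3λ₂)/4, α₁ = (λ₁-λ₂)/8, and α₂ = -(λ₁-λ₂)/8. -/
/-!
Differentiating `s² = (λ - λ₁)(λ - λ₂)` in `λ₁` gives `2 s ∂₁s = -(λ - λ₂)`, so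
`∂₁ν = (s - (λ - λ₂)) / (4 s)`. Since `ν - γ₁ = (s + λ - λ₁) / 2` and
`(s - (λ - λ₂)) (s + (λ - λ₁)) = (λ₂ - λ₁) s`, this is `-α₁ / (ν - γ₁)`; the denominator
vanishes only if `s = 0` or `λ₁ = λ₂`. The equation in `λ₂` is the same one with `λ₁, λ₂` swapped.
-/

open Filter Topology

theorem HasDerivAt.two_mul_mul_eq_of_sq_eventuallyEq {𝕜 : Type*} [NontriviallyNormedField 𝕜]
    {f g : 𝕜 → 𝕜} {f' g' x : 𝕜} (hf : HasDerivAt f f' x) (hg : HasDerivAt g g' x)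
    (h : (fun y => f y ^ 2) =ᶠ[𝓝 x] g) : 2 * f x * f' = g' := by
  simpa using (hf.pow 2).unique (hg.congr_of_eventuallyEq h)

theorem add_sub_ne_zero_of_sq_eq_mul {K : Type*} [Field K] {σ c a b : K}
    (hσ : σ ^ 2 = (c - a) * (c - b)) (hσ0 : σ ≠ 0) (hab : a ≠ b) : σ + (c - a) ≠ 0 := by
  intro h
  have hσa : σ = a - c := by linear_combination h
  have : (c - a) * (a - b) = 0 := by rw [hσa] at hσ; linear_combination -hσ
  rcases mul_eq_zero.mp this with hca | hab'
  · exact hσ0 (by linear_combination hσa - hca)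
  · exact hab (sub_eq_zero.mp hab')

theorem hasDerivAt_half_add_branch {lam a b : ℂ} {σ : ℂ → ℂ} (hab : a ≠ b)
    (hσ : DifferentiableAt ℂ σ a) (hsq : ∀ᶠ x in 𝓝 a, σ x ^ 2 = (lam - x) * (lam - b))
    (hσ0 : σ a ≠ 0) :
    HasDerivAt (fun x => 1 / 2 * (lam + (x + b) / 2 + σ x))
      (-((a - b) / 8) / (1 / 2 * (lam + (a + b) / 2 + σ a) - (3 * a + b) / 4)) a := by
  have hsqa : σ a ^ 2 = (lam - a) * (lam - b) := hsq.self_of_nhds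
  have hchain : 2 * σ a * deriv σ a = -1 * (lam - b) :=
    hσ.hasDerivAt.two_mul_mul_eq_of_sq_eventuallyEq
      (((hasDerivAt_id a).const_sub lam).mul_const (lam - b)) hsq
  have hden := add_sub_ne_zero_of_sq_eq_mul hsqa hσ0 hab
  refine ((((((hasDerivAt_id a).add_const b).div_const 2).const_add lam).add
    hσ.hasDerivAt).const_mul (1 / 2)).congr_deriv ?_
  rw [eq_div_iff (by contrapose! hden; linear_combination 2 * hden)]
  refine mul_left_cancel₀ hσ0 ?_
  linear_combination ((lam - a + σ a) / 8) * hchain + (1 / 8) * hsqa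

/-- For a holomorphic branch `s` of `√((λ-λ₁)(λ-λ₂))`, the function
`ν(λ,λ₁,λ₂) = (1/2)(λ + (λ₁+λ₂)/2 + s)` satisfies
`∂ν/∂λ₁ = -α₁/(ν-γ₁)` and `∂ν/∂λ₂ = -α₂/(ν-γ₂)` with
`γ₁ = (3λ₁+λ₂)/4`, `γ₂ = (λ₁+3λ₂)/4`, `α₁ = (λ₁-λ₂)/8 = -α₂`. -/
theorem stmt1 (lam l1 l2 : ℂ) (hne : l1 ≠ l2)
    (s : ℂ × ℂ → ℂ) (hd : DifferentiableAt ℂ s (l1, l2))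
    (hsq : ∀ᶠ p in nhds (l1, l2), s p ^ 2 = (lam - p.1) * (lam - p.2))
    (hs0 : s (l1, l2) ≠ 0) :
    let ν : ℂ × ℂ → ℂ := fun p => (1 / 2) * (lam + (p.1 + p.2) / 2 + s p)
    deriv (fun x => ν (x, l2)) l1
        = -((l1 - l2) / 8) / (ν (l1, l2) - (3 * l1 + l2) / 4) ∧
    deriv (fun y => ν (l1, y)) l2
        = -(-(l1 - l2) / 8) / (ν (l1, l2) - (l1 + 3 * l2) / 4) := by
  intro ν
  have hν₁ : HasDerivAt (fun x => ν (x, l2)) _ l1 :=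
    hasDerivAt_half_add_branch hne
      (hd.comp l1 (differentiableAt_id.prodMk (differentiableAt_const l2)))
      ((continuous_id.prodMk continuous_const).continuousAt.eventually hsq) hs0
  have hν₂ : HasDerivAt (fun y => 1 / 2 * (lam + (y + l1) / 2 + s (l1, y))) _ l2 :=
    hasDerivAt_half_add_branch hne.symm
      (hd.comp l2 ((differentiableAt_const l1).prodMk differentiableAt_id))
      (((continuous_const.prodMk continuous_id).continuousAt.eventually hsq).mono
        fun y hy => hy.trans (mul_comm _ _)) hs0
  refine ⟨hν₁.deriv, ?_⟩
  simp only [ν, add_comm l1]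
  rw [hν₂.deriv]
  ring
end

section
/- Suppose functions γₘ(λ₁,…,λ_M) and αₘ(λ₁,…,λ_M), m = 1,…,M, are such that for each fixed λ the equations ∂ν/∂λₙ = -αₙ/(ν-γₙ) (n = 1,…,M) for a function ν(λ, λ₁,…,λ_M) are compatible and ν(P_m) = γₘ; then for m ≠ n: ∂γₘ/∂λₙ = αₙ/(γₙ-γₘ) and ∂αₘ/∂λₙ = 2αₙαₘ/(γₙ-γₘ)². -/
/-- Partial derivative of `f : (Fin M → ℂ) → ℂ` along the `k`-th coordinate at `Λ`. -/
noncomputable def pcoord {M : ℕ} (k : Fin M) (f : (Fin M → ℂ) → ℂ) (Λ : Fin M → ℂ) : ℂ :=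
  deriv (fun x => f (Function.update Λ k x)) (Λ k)

/-!
Substituting the quotient rule, the compatibility condition becomes an identity between
rational functions of `x` with poles only at `γₘ` and `γₙ`. Cleared of denominators it is a
cubic in `x - γₘ` that vanishes at all but finitely many `x`, hence has zero coefficients.
Its constant coefficient is the double-pole part at `γₘ`, which gives `∂γₘ/∂λₙ`; its linear
coefficient is the residue at `γₘ`, which then gives `∂αₘ/∂λₙ`.
-/

open Polynomial

theorem Polynomial.eq_zero_of_eval_eq_zero_of_finite {R : Type*} [CommRing R] [IsDomain R]
    [Infinite R] {p : R[X]} {s : Set R} (hs : s.Finite) (h : ∀ x ∉ s, p.eval x = 0) : p = 0 :=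
  p.eq_zero_of_infinite_isRoot (hs.infinite_compl.mono h)

theorem coeffs_eq_zero_of_cubic_eq_zero_of_finite {K : Type*} [Field K] [Infinite K]
    {a c₀ c₁ c₂ c₃ : K} {s : Set K} (hs : s.Finite)
    (h : ∀ x ∉ s, c₀ + c₁ * (x - a) + c₂ * (x - a) ^ 2 + c₃ * (x - a) ^ 3 = 0) :
    c₀ = 0 ∧ c₁ = 0 := by
  set p : K[X] := C c₀ + C c₁ * X + C c₂ * X ^ 2 + C c₃ * X ^ 3
  have hp : p = 0 := by
    refine eq_zero_of_eval_eq_zero_of_finite (hs.preimage (add_left_injective a).injOn) ?_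
    intro t ht
    simpa [p] using h (t + a) ht
  have h₀ := congrArg (coeff · 0) hp
  have h₁ := congrArg (coeff · 1) hp
  simp [p, coeff_X, coeff_X_pow] at h₀ h₁
  exact ⟨h₀, h₁⟩

theorem deriv_neg_div_sub {𝕜 : Type*} [NontriviallyNormedField 𝕜] (a c x : 𝕜) (hx : x ≠ c) :
    deriv (fun y => -a / (y - c)) x = a / (x - c) ^ 2 := by
  have h := (hasDerivAt_const x (-a)).fun_div ((hasDerivAt_id' x).sub_const c) (sub_ne_zero.mpr hx)
  rw [h.deriv]
  ring

theorem pcoord_neg_div_sub {M : ℕ} (k : Fin M) (g a : (Fin M → ℂ) → ℂ) (Λ : Fin M → ℂ) (x : ℂ)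
    (hg : DifferentiableAt ℂ (fun y => g (Function.update Λ k y)) (Λ k))
    (ha : DifferentiableAt ℂ (fun y => a (Function.update Λ k y)) (Λ k)) (hx : x ≠ g Λ) :
    pcoord k (fun Λ' => -a Λ' / (x - g Λ')) Λ
      = (-pcoord k a Λ * (x - g Λ) - a Λ * pcoord k g Λ) / (x - g Λ) ^ 2 := by
  have hx' : x - g (Function.update Λ k (Λ k)) ≠ 0 := by
    rwa [Function.update_eq_self, sub_ne_zero]
  have h := ha.hasDerivAt.fun_neg.fun_div ((hasDerivAt_const _ x).fun_sub hg.hasDerivAt) hx'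
  rw [pcoord, h.deriv, Function.update_eq_self, pcoord, pcoord]
  ring

theorem derivs_of_compatible {K : Type*} [Field K] [Infinite K]
    {γₘ γₙ αₘ αₙ dγₘ dαₘ dγₙ dαₙ : K} (hγ : γₘ ≠ γₙ) (hα : αₘ ≠ 0) {s : Set K} (hs : s.Finite)
    (h : ∀ x ∉ s, x ≠ γₘ → x ≠ γₙ →
      (-dαₘ * (x - γₘ) - αₘ * dγₘ) / (x - γₘ) ^ 2 + -αₙ / (x - γₙ) * (αₘ / (x - γₘ) ^ 2)
        = (-dαₙ * (x - γₙ) - αₙ * dγₙ) / (x - γₙ) ^ 2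
          + -αₘ / (x - γₘ) * (αₙ / (x - γₙ) ^ 2)) :
    dγₘ = αₙ / (γₙ - γₘ) ∧ dαₘ = 2 * αₙ * αₘ / (γₙ - γₘ) ^ 2 := by
  have hd : γₘ - γₙ ≠ 0 := sub_ne_zero.mpr hγ
  -- `h` multiplied by `(x - γₘ) ^ 2 * (x - γₙ) ^ 2`, expanded in powers of `x - γₘ`
  obtain ⟨h₀, h₁⟩ := coeffs_eq_zero_of_cubic_eq_zero_of_finite (a := γₘ)
    (c₀ := -αₘ * dγₘ * (γₘ - γₙ) ^ 2 - αₙ * αₘ * (γₘ - γₙ))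
    (c₁ := -dαₘ * (γₘ - γₙ) ^ 2 - 2 * αₘ * dγₘ * (γₘ - γₙ))
    (c₂ := -2 * dαₘ * (γₘ - γₙ) - αₘ * dγₘ + dαₙ * (γₘ - γₙ) + αₙ * dγₙ) (c₃ := dαₙ - dαₘ)
    (hs.union (Set.toFinite {γₘ, γₙ})) fun x hx => by
      simp only [Set.mem_union, Set.mem_insert_iff, Set.mem_singleton_iff, not_or] at hx
      obtain ⟨hxs, hxm, hxn⟩ := hx
      have e := h x hxs hxm hxn
      have hxm' : x - γₘ ≠ 0 := sub_ne_zero.mpr hxm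
      have hxn' : x - γₙ ≠ 0 := sub_ne_zero.mpr hxn
      field_simp at e
      linear_combination e
  have hdγₘ : dγₘ * (γₘ - γₙ) = -αₙ := by
    apply mul_left_cancel₀ (mul_ne_zero hα hd)
    linear_combination -h₀
  refine ⟨?_, ?_⟩
  · rw [eq_div_iff (sub_ne_zero.mpr hγ.symm)]
    linear_combination -hdγₘ
  · rw [eq_div_iff (pow_ne_zero 2 (sub_ne_zero.mpr hγ.symm))]
    linear_combination -h₁ - 2 * αₘ * hdγₘ

/-- If the equations `∂ν/∂λₙ = -αₙ/(ν-γₙ)`, `n = 1,…,M`, are compatible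
(Frobenius compatibility of the right-hand sides, for all values `x` of `ν` avoiding
the points `γⱼ`), then for `m ≠ n`:
`∂γₘ/∂λₙ = αₙ/(γₙ-γₘ)` and `∂αₘ/∂λₙ = 2αₙαₘ/(γₙ-γₘ)²`. -/
theorem stmt3 {M : ℕ} (γ α : Fin M → (Fin M → ℂ) → ℂ) (Λ : Fin M → ℂ)
    (hdiffγ : ∀ k l : Fin M, DifferentiableAt ℂ (fun x => γ k (Function.update Λ l x)) (Λ l))
    (hdiffα : ∀ k l : Fin M, DifferentiableAt ℂ (fun x => α k (Function.update Λ l x)) (Λ l))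
    (hdist : ∀ k l : Fin M, k ≠ l → γ k Λ ≠ γ l Λ)
    (hα : ∀ k, α k Λ ≠ 0)
    (hcomp : ∀ k l : Fin M, k ≠ l → ∀ x : ℂ, (∀ j, x ≠ γ j Λ) →
      pcoord l (fun Λ' => -α k Λ' / (x - γ k Λ')) Λ
          + (-α l Λ / (x - γ l Λ)) * deriv (fun y => -α k Λ / (y - γ k Λ)) x
        = pcoord k (fun Λ' => -α l Λ' / (x - γ l Λ')) Λ
          + (-α k Λ / (x - γ k Λ)) * deriv (fun y => -α l Λ / (y - γ l Λ)) x)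
    (m n : Fin M) (hmn : m ≠ n) :
    pcoord n (γ m) Λ = α n Λ / (γ n Λ - γ m Λ) ∧
    pcoord n (α m) Λ = 2 * α n Λ * α m Λ / (γ n Λ - γ m Λ) ^ 2 := by
  refine derivs_of_compatible (dγₙ := pcoord m (γ n) Λ) (dαₙ := pcoord m (α n) Λ)
    (hdist m n hmn) (hα m) (Set.finite_range fun j => γ j Λ) fun x hx hxm hxn => ?_
  have h := hcomp m n hmn x fun j hj => hx ⟨j, hj.symm⟩
  rwa [pcoord_neg_div_sub n (γ m) (α m) Λ x (hdiffγ m n) (hdiffα m n) hxm,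
    pcoord_neg_div_sub m (γ n) (α n) Λ x (hdiffγ n m) (hdiffα n m) hxn,
    deriv_neg_div_sub _ _ _ hxm, deriv_neg_div_sub _ _ _ hxn] at h
end

section
/- Let h : [0,1] → ℂ be a continuous function and l a smooth closed contour in ℂ avoiding ξ and ξ̄. Then f(ξ,ξ̄) = ∮_l h(λ) dλ / √((λ-ξ)(λ-ξ̄)) satisfies the Euler–Darboux type equation f_{ξξ̄} - (f_ξ - f_{ξ̄})/(2(ξ-ξ̄)) = 0. -/
/-!
Differentiating under the integral sign reduces the equation to the kernel `1/s`, where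
`s² = (λ - ξ)(λ - η)`. From `2 s ∂s = -(λ - η) dξ - (λ - ξ) dη` one gets
`∂_ξ (1/s) = (λ - η)/(2 s³)`, `∂_η (1/s) = (λ - ξ)/(2 s³)` and `∂_η ∂_ξ (1/s) = 1/(4 s³)`,
so `∂_ξ (1/s) - ∂_η (1/s) = 2 (ξ - η) ∂_η ∂_ξ (1/s)` holds pointwise on the contour.
-/

open MeasureTheory Set
open scoped Topology Interval

/-- Partial derivative with respect to the first variable. -/
noncomputable def pd1 (f : ℂ × ℂ → ℂ) (p : ℂ × ℂ) : ℂ :=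
  deriv (fun x => f (x, p.2)) p.1

/-- Partial derivative with respect to the second variable. -/
noncomputable def pd2 (f : ℂ × ℂ → ℂ) (p : ℂ × ℂ) : ℂ :=
  deriv (fun y => f (p.1, y)) p.2

/-- The identity `(u z - u z₀)(u z + u z₀) = g z - g z₀` turns the slope of `g` into that of `u`. -/
theorem hasDerivAt_of_sq_eq {𝕜 : Type*} [NontriviallyNormedField 𝕜] [CharZero 𝕜]
    {u g : 𝕜 → 𝕜} {z₀ d : 𝕜} (hu : ContinuousAt u z₀) (hg : HasDerivAt g d z₀)
    (hsq : ∀ᶠ z in 𝓝 z₀, u z ^ 2 = g z) (h0 : u z₀ ≠ 0) :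
    HasDerivAt u (d / (2 * u z₀)) z₀ := by
  have h2 : (2 : 𝕜) * u z₀ ≠ 0 := mul_ne_zero two_ne_zero h0
  have hadd : Filter.Tendsto (fun z => u z + u z₀) (𝓝 z₀) (𝓝 (2 * u z₀)) := by
    simpa only [two_mul] using hu.tendsto.add tendsto_const_nhds
  rw [hasDerivAt_iff_tendsto_slope] at hg ⊢
  have hslope : ∀ᶠ z in 𝓝[≠] z₀, slope g z₀ z / (u z + u z₀) = slope u z₀ z := by
    filter_upwards [self_mem_nhdsWithin, nhdsWithin_le_nhds hsq,
      nhdsWithin_le_nhds (hadd.eventually_ne h2)] with z hz hsz hnz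
    have hz' : z - z₀ ≠ 0 := sub_ne_zero.2 hz
    simp only [slope_def_field]
    field_simp
    linear_combination hsq.self_of_nhds - hsz
  exact (hg.div (hadd.mono_left nhdsWithin_le_nhds) h2).congr' hslope

theorem hasDerivAt_intervalIntegral_of_continuousOn {𝕜 E : Type*} [RCLike 𝕜]
    [NormedAddCommGroup E] [NormedSpace ℝ E] [NormedSpace 𝕜 E]
    {μ : Measure ℝ} [IsLocallyFiniteMeasure μ] {a b : ℝ} {V : Set 𝕜} {F F' : ℝ → 𝕜 → E}
    (hV : IsOpen V) (hF : ContinuousOn (fun q : ℝ × 𝕜 => F q.1 q.2) ([[a, b]] ×ˢ V))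
    (hF' : ContinuousOn (fun q : ℝ × 𝕜 => F' q.1 q.2) ([[a, b]] ×ˢ V))
    (hd : ∀ t ∈ [[a, b]], ∀ z ∈ V, HasDerivAt (F t) (F' t z) z) {z₀ : 𝕜} (hz₀ : z₀ ∈ V) :
    HasDerivAt (fun z => ∫ t in a..b, F t z ∂μ) (∫ t in a..b, F' t z₀ ∂μ) z₀ := by
  obtain ⟨ε, hε, hεV⟩ := Metric.nhds_basis_closedBall.mem_iff.1 (hV.mem_nhds hz₀)
  have hK : [[a, b]] ×ˢ Metric.closedBall z₀ ε ⊆ [[a, b]] ×ˢ V := prod_mono subset_rfl hεV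
  obtain ⟨C, hC⟩ := (isCompact_uIcc.prod (isCompact_closedBall z₀ ε)).exists_bound_of_continuousOn
    (hF'.mono hK)
  have hslice : ∀ {G : ℝ → 𝕜 → E}, ContinuousOn (fun q : ℝ × 𝕜 => G q.1 q.2) ([[a, b]] ×ˢ V) →
      ∀ z ∈ V, ContinuousOn (G · z) [[a, b]] := fun hG z hz =>
    hG.comp (continuous_id.prodMk continuous_const).continuousOn fun _ ht => ⟨ht, hz⟩
  have hmeas : ∀ {G : ℝ → 𝕜 → E}, ContinuousOn (fun q : ℝ × 𝕜 => G q.1 q.2) ([[a, b]] ×ˢ V) →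
      ∀ z ∈ V, AEStronglyMeasurable (G · z) (μ.restrict (Ι a b)) := fun hG z hz =>
    ((hslice hG z hz).mono uIoc_subset_uIcc).aestronglyMeasurable measurableSet_uIoc
  refine (intervalIntegral.hasDerivAt_integral_of_dominated_loc_of_deriv_le
    (F := fun z t => F t z) (F' := fun z t => F' t z) (bound := fun _ => C)
    (Metric.ball_mem_nhds z₀ hε) ?_ (hslice hF z₀ hz₀).intervalIntegrable (hmeas hF' z₀ hz₀)
    ?_ intervalIntegrable_const ?_).2
  · filter_upwards [hV.mem_nhds hz₀] with z hz using hmeas hF z hz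
  · exact Filter.Eventually.of_forall fun t ht z hz =>
      hC (t, z) ⟨uIoc_subset_uIcc ht, Metric.ball_subset_closedBall hz⟩
  · exact Filter.Eventually.of_forall fun t ht z hz =>
      hd t (uIoc_subset_uIcc ht) z (hεV (Metric.ball_subset_closedBall hz))

section Slice

variable {a b : ℝ} {c w A : ℝ → ℂ} {u : ℝ → ℂ → ℂ} {V : Set ℂ} (hV : IsOpen V)
  (hu : ContinuousOn (fun q : ℝ × ℂ => u q.1 q.2) ([[a, b]] ×ˢ V))
  (hsq : ∀ t ∈ [[a, b]], ∀ z ∈ V, u t z ^ 2 = (c t - z) * w t)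
  (h0 : ∀ t ∈ [[a, b]], ∀ z ∈ V, u t z ≠ 0)
include hV hu hsq h0

theorem hasDerivAt_of_sq_eq_sub_mul {t : ℝ} (ht : t ∈ [[a, b]]) {z : ℂ} (hz : z ∈ V) :
    HasDerivAt (u t) (-w t / (2 * u t z)) z := by
  have hcont : ContinuousOn (u t) V :=
    hu.comp (continuous_const.prodMk continuous_id).continuousOn fun _ hz' => ⟨ht, hz'⟩
  have hg : HasDerivAt (fun z => (c t - z) * w t) (-w t) z := by
    simpa using ((hasDerivAt_id z).const_sub (c t)).mul_const (w t)
  exact hasDerivAt_of_sq_eq (hcont.continuousAt (hV.mem_nhds hz)) hg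
    (Filter.eventually_of_mem (hV.mem_nhds hz) (hsq t ht)) (h0 t ht z hz)

theorem hasDerivAt_integral_div_of_sq_eq_sub_mul (hw : Continuous w)
    (hA : ContinuousOn A [[a, b]]) {z : ℂ} (hz : z ∈ V) :
    HasDerivAt (fun z => ∫ t in a..b, A t / u t z)
      (∫ t in a..b, A t * w t / (2 * u t z ^ 3)) z := by
  have hA' : ContinuousOn (fun q : ℝ × ℂ => A q.1) ([[a, b]] ×ˢ V) :=
    hA.comp continuous_fst.continuousOn fun _ hq => hq.1
  refine hasDerivAt_intervalIntegral_of_continuousOn (F := fun t z => A t / u t z)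
    (F' := fun t z => A t * w t / (2 * u t z ^ 3)) hV (hA'.div hu fun q hq => h0 _ hq.1 _ hq.2)
    ((hA'.mul (hw.comp continuous_fst).continuousOn).div (continuousOn_const.mul (hu.pow 3))
      fun q hq => mul_ne_zero two_ne_zero (pow_ne_zero _ (h0 _ hq.1 _ hq.2)))
    (fun t ht z hz => ?_) hz
  refine ((hasDerivAt_const z (A t)).div (hasDerivAt_of_sq_eq_sub_mul hV hu hsq h0 ht hz)
    (h0 t ht z hz)).congr_deriv ?_
  field_simp
  ring

/-- The cofactor `w` cancels against `u² = (c - z) w`. -/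
theorem hasDerivAt_integral_sub_div_pow_three (hc : Continuous c)
    (hA : ContinuousOn A [[a, b]]) {z : ℂ} (hz : z ∈ V) :
    HasDerivAt (fun z => ∫ t in a..b, A t * (c t - z) / (2 * u t z ^ 3))
      (∫ t in a..b, A t / (4 * u t z ^ 3)) z := by
  have hA' : ContinuousOn (fun q : ℝ × ℂ => A q.1) ([[a, b]] ×ˢ V) :=
    hA.comp continuous_fst.continuousOn fun _ hq => hq.1
  refine hasDerivAt_intervalIntegral_of_continuousOn
    (F := fun t z => A t * (c t - z) / (2 * u t z ^ 3)) (F' := fun t z => A t / (4 * u t z ^ 3)) hV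
    ((hA'.mul ((hc.comp continuous_fst).sub continuous_snd).continuousOn).div
      (continuousOn_const.mul (hu.pow 3))
      fun q hq => mul_ne_zero two_ne_zero (pow_ne_zero _ (h0 _ hq.1 _ hq.2)))
    (hA'.div (continuousOn_const.mul (hu.pow 3))
      fun q hq => mul_ne_zero (by norm_num) (pow_ne_zero _ (h0 _ hq.1 _ hq.2)))
    (fun t ht z hz => ?_) hz
  have hnz := h0 t ht z hz
  have hnum : HasDerivAt (fun z => A t * (c t - z)) (-A t) z := by
    simpa using ((hasDerivAt_id z).const_sub (c t)).const_mul (A t)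
  have hden := ((hasDerivAt_of_sq_eq_sub_mul hV hu hsq h0 ht hz).fun_pow 3).const_mul (2 : ℂ)
  refine (hnum.div hden (mul_ne_zero two_ne_zero (pow_ne_zero _ hnz))).congr_deriv ?_
  push_cast
  field_simp
  linear_combination (-12 * A t) * hsq t ht z hz

end Slice

section Kernel

variable {a b : ℝ} {c A : ℝ → ℂ} {s : ℝ → ℂ × ℂ → ℂ} {U : Set (ℂ × ℂ)}
  (hU : IsOpen U) (hc : Continuous c) (hA : ContinuousOn A [[a, b]])
  (hs : Continuous fun q : ℝ × (ℂ × ℂ) => s q.1 q.2)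
  (hsq : ∀ t ∈ [[a, b]], ∀ p ∈ U, s t p ^ 2 = (c t - p.1) * (c t - p.2))
  (h0 : ∀ t ∈ [[a, b]], ∀ p ∈ U, s t p ≠ 0)
include hU hc hA hs hsq h0

theorem pd1_integral_div {p : ℂ × ℂ} (hp : p ∈ U) :
    pd1 (fun p => ∫ t in a..b, A t / s t p) p =
      ∫ t in a..b, A t * (c t - p.2) / (2 * s t p ^ 3) :=
  (hasDerivAt_integral_div_of_sq_eq_sub_mul (u := fun t x => s t (x, p.2))
    (V := {x | (x, p.2) ∈ U}) (hU.preimage (continuous_id.prodMk continuous_const))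
    (hs.comp (continuous_fst.prodMk (continuous_snd.prodMk continuous_const))).continuousOn
    (fun t ht _ hx => hsq t ht _ hx) (fun t ht _ hx => h0 t ht _ hx)
    (hc.sub continuous_const) hA hp).deriv

theorem pd2_integral_div {p : ℂ × ℂ} (hp : p ∈ U) :
    pd2 (fun p => ∫ t in a..b, A t / s t p) p =
      ∫ t in a..b, A t * (c t - p.1) / (2 * s t p ^ 3) :=
  (hasDerivAt_integral_div_of_sq_eq_sub_mul (u := fun t y => s t (p.1, y))
    (w := fun t => c t - p.1) (V := {y | (p.1, y) ∈ U})
    (hU.preimage (continuous_const.prodMk continuous_id))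
    (hs.comp (continuous_fst.prodMk (continuous_const.prodMk continuous_snd))).continuousOn
    (fun t ht _ hy => (hsq t ht _ hy).trans (mul_comm _ _)) (fun t ht _ hy => h0 t ht _ hy)
    (hc.sub continuous_const) hA hp).deriv

theorem pd2_pd1_integral_div {p : ℂ × ℂ} (hp : p ∈ U) :
    pd2 (pd1 fun p => ∫ t in a..b, A t / s t p) p = ∫ t in a..b, A t / (4 * s t p ^ 3) := by
  have hV : IsOpen {y | (p.1, y) ∈ U} := hU.preimage (continuous_const.prodMk continuous_id)
  have hpd1 : (fun y => pd1 (fun p => ∫ t in a..b, A t / s t p) (p.1, y)) =ᶠ[𝓝 p.2]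
      fun y => ∫ t in a..b, A t * (c t - y) / (2 * s t (p.1, y) ^ 3) :=
    Filter.eventually_of_mem (hV.mem_nhds hp) fun y hy => pd1_integral_div hU hc hA hs hsq h0 hy
  rw [pd2, hpd1.deriv_eq]
  exact (hasDerivAt_integral_sub_div_pow_three (u := fun t y => s t (p.1, y))
    (w := fun t => c t - p.1) hV
    (hs.comp (continuous_fst.prodMk (continuous_const.prodMk continuous_snd))).continuousOn
    (fun t ht _ hy => (hsq t ht _ hy).trans (mul_comm _ _)) (fun t ht _ hy => h0 t ht _ hy)
    hc hA hp).deriv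

theorem pd1_sub_pd2_integral_div {p : ℂ × ℂ} (hp : p ∈ U) :
    pd1 (fun p => ∫ t in a..b, A t / s t p) p - pd2 (fun p => ∫ t in a..b, A t / s t p) p =
      2 * (p.1 - p.2) * pd2 (pd1 fun p => ∫ t in a..b, A t / s t p) p := by
  have hint (z : ℂ) :
      IntervalIntegrable (fun t => A t * (c t - z) / (2 * s t p ^ 3)) volume a b :=
    ContinuousOn.intervalIntegrable <| (hA.mul (hc.sub continuous_const).continuousOn).div
      (continuous_const.mul ((hs.comp (continuous_id.prodMk continuous_const)).pow 3)).continuousOn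
      fun t ht => mul_ne_zero two_ne_zero (pow_ne_zero _ (h0 t ht p hp))
  rw [pd1_integral_div hU hc hA hs hsq h0 hp, pd2_integral_div hU hc hA hs hsq h0 hp,
    pd2_pd1_integral_div hU hc hA hs hsq h0 hp, ← intervalIntegral.integral_sub (hint _) (hint _),
    ← intervalIntegral.integral_const_mul]
  refine intervalIntegral.integral_congr fun t ht => ?_
  have := h0 t ht p hp
  field_simp
  ring

end Kernel

theorem stmt5_general (c : ℝ → ℂ) (hc : ContDiff ℝ 1 c)
    (h : ℝ → ℂ) (hh : ContinuousOn h (Set.Icc 0 1))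
    (ξ η : ℂ) (hne : ξ ≠ η)
    (U : Set (ℂ × ℂ)) (hU : IsOpen U) (hmem : (ξ, η) ∈ U)
    (s : ℝ → ℂ × ℂ → ℂ)
    (hscont : Continuous fun q : ℝ × (ℂ × ℂ) => s q.1 q.2)
    (hsq : ∀ t ∈ Set.Icc (0:ℝ) 1, ∀ p ∈ U, (s t p) ^ 2 = (c t - p.1) * (c t - p.2))
    (hs0 : ∀ t ∈ Set.Icc (0:ℝ) 1, ∀ p ∈ U, s t p ≠ 0) :
    let f : ℂ × ℂ → ℂ := fun p => ∫ t in (0:ℝ)..1, h t * deriv c t / s t p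
    pd2 (pd1 f) (ξ, η) - (pd1 f (ξ, η) - pd2 f (ξ, η)) / (2 * (ξ - η)) = 0 := by
  intro f
  rw [← uIcc_of_le zero_le_one] at hh hsq hs0
  have hdiff : pd1 f (ξ, η) - pd2 f (ξ, η) = 2 * (ξ - η) * pd2 (pd1 f) (ξ, η) :=
    pd1_sub_pd2_integral_div hU hc.continuous (hh.mul (hc.continuous_deriv le_rfl).continuousOn)
      hscont hsq hs0 hmem
  rw [hdiff, mul_div_cancel_left₀ _ (mul_ne_zero two_ne_zero (sub_ne_zero.2 hne)), sub_self]

/-- For a smooth closed contour `c` (avoiding `ξ, ξ̄`), a continuous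
density `h`, and a fixed branch `s(t,(ξ,ξ̄))` of `√((c(t)-ξ)(c(t)-ξ̄))` (continuous in
all variables, nonvanishing, contour and branch independent of `(ξ,ξ̄)`), the function
`f(ξ,ξ̄) = ∮ h(λ) dλ / √((λ-ξ)(λ-ξ̄))` satisfies
`f_{ξξ̄} - (f_ξ - f_{ξ̄})/(2(ξ-ξ̄)) = 0`. -/
theorem stmt5 (c : ℝ → ℂ) (hc : ContDiff ℝ 1 c) (hclosed : c 1 = c 0)
    (h : ℝ → ℂ) (hh : ContinuousOn h (Set.Icc 0 1))
    (ξ η : ℂ) (hne : ξ ≠ η)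
    (U : Set (ℂ × ℂ)) (hU : IsOpen U) (hmem : (ξ, η) ∈ U)
    (s : ℝ → ℂ × ℂ → ℂ)
    (hscont : Continuous fun q : ℝ × (ℂ × ℂ) => s q.1 q.2)
    (hsq : ∀ t ∈ Set.Icc (0:ℝ) 1, ∀ p ∈ U, (s t p) ^ 2 = (c t - p.1) * (c t - p.2))
    (hs0 : ∀ t ∈ Set.Icc (0:ℝ) 1, ∀ p ∈ U, s t p ≠ 0) :
    let f : ℂ × ℂ → ℂ := fun p => ∫ t in (0:ℝ)..1, h t * deriv c t / s t p
    pd2 (pd1 f) (ξ, η) - (pd1 f (ξ, η) - pd2 f (ξ, η)) / (2 * (ξ - η)) = 0 :=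
  stmt5_general c hc h hh ξ η hne U hU hmem s hscont hsq hs0
end

section
/- Suppose G(ξ,ξ̄) is a smooth invertible r×r complex matrix-valued function satisfying the Ernst equation ((ξ-ξ̄)G_ξ G⁻¹)_{ξ̄} + ((ξ-ξ̄)G_{ξ̄} G⁻¹)_ξ = 0. Then the 1-form q = ((ξ-ξ̄)/4) tr(G_ξ G⁻¹)² dξ + ((ξ̄-ξ)/4) tr(G_{ξ̄} G⁻¹)² dξ̄ is closed, i.e. ∂_{ξ̄}[((ξ-ξ̄)/4) tr(G_ξ G⁻¹)²] = ∂_ξ[((ξ̄-ξ)/4) tr(G_{ξ̄} G⁻¹)²]. -/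
/-- Entrywise partial derivative of a matrix-valued function, first variable. -/
noncomputable def pdM1 {r : ℕ} (G : ℂ × ℂ → Matrix (Fin r) (Fin r) ℂ) (p : ℂ × ℂ) :
    Matrix (Fin r) (Fin r) ℂ :=
  Matrix.of fun i j => pd1 (fun q => G q i j) p

/-- Entrywise partial derivative of a matrix-valued function, second variable. -/
noncomputable def pdM2 {r : ℕ} (G : ℂ × ℂ → Matrix (Fin r) (Fin r) ℂ) (p : ℂ × ℂ) :
    Matrix (Fin r) (Fin r) ℂ :=
  Matrix.of fun i j => pd2 (fun q => G q i j) p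

/-!
Write `A = G_ξ G⁻¹`, `B = G_ξ̄ G⁻¹` and `N = G_ξξ̄ G⁻¹`. Differentiating `G⁻¹` gives
`∂_ξ̄ A = N - AB` and, by symmetry of second derivatives, `∂_ξ B = N - BA`; so the Ernst equation
says `(ξ - ξ̄)(2N - AB - BA) = A - B`. Multiplying by `A + B` and taking traces, cyclicity
(`tr ABA = tr A²B`, `tr BAB = tr B²A`) turns this into
`tr A² - tr B² = 2(ξ - ξ̄)(tr(A ∂_ξ̄ A) + tr(B ∂_ξ B))`, which is the closedness of `q`.
-/

open Matrix

theorem fderiv_fderiv_apply_comm {𝕜 E F : Type*} [RCLike 𝕜] [NormedAddCommGroup E]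
    [NormedSpace 𝕜 E] [NormedAddCommGroup F] [NormedSpace 𝕜 F] {f : E → F}
    (hf : ContDiff 𝕜 2 f) (x v w : E) :
    fderiv 𝕜 (fun y => fderiv 𝕜 f y v) x w = fderiv 𝕜 (fun y => fderiv 𝕜 f y w) x v := by
  have hdf : DifferentiableAt 𝕜 (fderiv 𝕜 f) x :=
    (hf.fderiv_right (m := 1) le_rfl).differentiable one_ne_zero x
  rw [fderiv_clm_apply hdf (differentiableAt_const v),
    fderiv_clm_apply hdf (differentiableAt_const w)]
  simpa using (hf.contDiffAt.isSymmSndFDerivAt (by simp)).eq w v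

section PartialDerivatives

variable {f : ℂ × ℂ → ℂ} {a b : ℂ}

theorem hasDerivAt_pd1 (hf : DifferentiableAt ℂ f (a, b)) :
    HasDerivAt (fun x => f (x, b)) (pd1 f (a, b)) a :=
  (hf.comp a (differentiableAt_id.prodMk (differentiableAt_const b))).hasDerivAt

theorem hasDerivAt_pd2 (hf : DifferentiableAt ℂ f (a, b)) :
    HasDerivAt (fun y => f (a, y)) (pd2 f (a, b)) b :=
  (hf.comp b ((differentiableAt_const a).prodMk differentiableAt_id)).hasDerivAt

theorem pd1_eq_fderiv (hf : Differentiable ℂ f) : pd1 f = fun q => fderiv ℂ f q (1, 0) :=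
  funext fun ⟨a, b⟩ => ((hf (a, b)).hasFDerivAt.comp_hasDerivAt a
    ((hasDerivAt_id a).prodMk (hasDerivAt_const a b))).deriv

theorem pd2_eq_fderiv (hf : Differentiable ℂ f) : pd2 f = fun q => fderiv ℂ f q (0, 1) :=
  funext fun ⟨a, b⟩ => ((hf (a, b)).hasFDerivAt.comp_hasDerivAt b
    ((hasDerivAt_const b a).prodMk (hasDerivAt_id b))).deriv

theorem ContDiff.pd1 (hf : ContDiff ℂ 2 f) : ContDiff ℂ 1 (pd1 f) := by
  rw [pd1_eq_fderiv (hf.differentiable two_ne_zero)]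
  exact (hf.fderiv_right (m := 1) le_rfl).clm_apply contDiff_const

theorem ContDiff.pd2 (hf : ContDiff ℂ 2 f) : ContDiff ℂ 1 (pd2 f) := by
  rw [pd2_eq_fderiv (hf.differentiable two_ne_zero)]
  exact (hf.fderiv_right (m := 1) le_rfl).clm_apply contDiff_const

theorem pd1_pd2_eq_pd2_pd1 (hf : ContDiff ℂ 2 f) (p : ℂ × ℂ) : pd1 (pd2 f) p = pd2 (pd1 f) p := by
  rw [pd1_eq_fderiv (hf.pd2.differentiable one_ne_zero),
    pd2_eq_fderiv (hf.pd1.differentiable one_ne_zero), pd2_eq_fderiv (hf.differentiable two_ne_zero),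
    pd1_eq_fderiv (hf.differentiable two_ne_zero)]
  exact fderiv_fderiv_apply_comm hf p _ _

end PartialDerivatives

-- Any norm would do; this one makes matrices a normed algebra, so that the library's product and
-- inverse rules for derivatives apply to matrix-valued functions.
attribute [local instance] Matrix.linftyOpNormedRing Matrix.linftyOpNormedAlgebra

section MatrixCalculus

variable {𝕜 n : Type*} [RCLike 𝕜] [Fintype n] [DecidableEq n]
  {F K : 𝕜 → Matrix n n 𝕜} {F' K' : Matrix n n 𝕜} {t : 𝕜}

theorem hasDerivAt_matrix_iff :
    HasDerivAt F F' t ↔ ∀ i j, HasDerivAt (fun s => F s i j) (F' i j) t := by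
  refine ⟨fun h i j => ?_, fun h => ?_⟩
  · exact (LinearMap.toContinuousLinearMap (entryLinearMap 𝕜 𝕜 i j)).hasFDerivAt.comp_hasDerivAt t h
  · rw [funext fun s => matrix_eq_sum_single (F s), matrix_eq_sum_single F']
    exact HasDerivAt.fun_sum fun i _ => HasDerivAt.fun_sum fun j _ =>
      (LinearMap.toContinuousLinearMap (singleLinearMap 𝕜 i j : 𝕜 →ₗ[𝕜] Matrix n n 𝕜)).hasFDerivAt
        |>.comp_hasDerivAt t (h i j)

theorem HasDerivAt.matrix_trace (h : HasDerivAt F F' t) :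
    HasDerivAt (fun s => trace (F s)) (trace F') t :=
  HasDerivAt.fun_sum fun i _ => hasDerivAt_matrix_iff.1 h i i

theorem HasDerivAt.matrix_trace_sq (h : HasDerivAt F F' t) :
    HasDerivAt (fun s => trace (F s ^ 2)) (2 * trace (F t * F')) t := by
  simp_rw [sq]
  refine (h.fun_mul h).matrix_trace.congr_deriv ?_
  rw [trace_add, trace_mul_comm F', two_mul]

theorem HasDerivAt.matrix_inv (h : HasDerivAt F F' t) (hF : IsUnit (F t)) :
    HasDerivAt (fun s => (F s)⁻¹) (-((F t)⁻¹ * F' * (F t)⁻¹)) t := by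
  obtain ⟨u, hu⟩ := hF
  simp_rw [nonsing_inv_eq_ringInverse]
  refine ((hasFDerivAt_ringInverse u).comp_hasDerivAt_of_eq t h hu).congr_deriv ?_
  simp [← hu]

theorem HasDerivAt.matrix_mul_inv (hF : HasDerivAt F F' t) (hK : HasDerivAt K K' t)
    (hKt : IsUnit (K t)) :
    HasDerivAt (fun s => F s * (K s)⁻¹)
      (F' * (K t)⁻¹ - F t * (K t)⁻¹ * (K' * (K t)⁻¹)) t := by
  refine (hF.fun_mul (hK.matrix_inv hKt)).congr_deriv ?_
  simp only [Matrix.mul_neg, Matrix.mul_assoc, sub_eq_add_neg]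

end MatrixCalculus

theorem Matrix.trace_sq_sub_trace_sq_of_smul_eq {n R : Type*} [Fintype n] [DecidableEq n]
    [CommRing R] {A B N : Matrix n n R} {c : R} (h : c • (N - A * B + (N - B * A)) = A - B) :
    trace (A ^ 2) - trace (B ^ 2)
      = 2 * c * (trace (A * (N - A * B)) + trace (B * (N - B * A))) := by
  have htr := congrArg (fun X => trace ((A + B) * X)) h
  simp only [Matrix.mul_smul, Matrix.add_mul, Matrix.mul_add, Matrix.mul_sub, trace_smul,
    trace_add, trace_sub, smul_eq_mul] at htr
  have hAB : trace (A * B) = trace (B * A) := trace_mul_comm A B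
  have hABA : trace (A * (B * A)) = trace (A * (A * B)) := by
    rw [← Matrix.mul_assoc, trace_mul_comm]
  have hBAB : trace (B * (A * B)) = trace (B * (B * A)) := by
    rw [← Matrix.mul_assoc, trace_mul_comm]
  simp only [sq, Matrix.mul_sub, trace_sub]
  linear_combination -htr + hAB - c * hABA - c * hBAB

section MatrixPartialDerivatives

variable {r : ℕ} {G : ℂ × ℂ → Matrix (Fin r) (Fin r) ℂ} {G' : Matrix (Fin r) (Fin r) ℂ} {a b : ℂ}

theorem hasDerivAt_pdM1 (hG : ∀ i j, DifferentiableAt ℂ (fun q => G q i j) (a, b)) :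
    HasDerivAt (fun x => G (x, b)) (pdM1 G (a, b)) a :=
  hasDerivAt_matrix_iff.2 fun i j => hasDerivAt_pd1 (hG i j)

theorem hasDerivAt_pdM2 (hG : ∀ i j, DifferentiableAt ℂ (fun q => G q i j) (a, b)) :
    HasDerivAt (fun y => G (a, y)) (pdM2 G (a, b)) b :=
  hasDerivAt_matrix_iff.2 fun i j => hasDerivAt_pd2 (hG i j)

theorem pdM1_eq_of_hasDerivAt (h : HasDerivAt (fun x => G (x, b)) G' a) : pdM1 G (a, b) = G' :=
  ext fun i j => (hasDerivAt_matrix_iff.1 h i j).deriv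

theorem pdM2_eq_of_hasDerivAt (h : HasDerivAt (fun y => G (a, y)) G' b) : pdM2 G (a, b) = G' :=
  ext fun i j => (hasDerivAt_matrix_iff.1 h i j).deriv

theorem pdM1_pdM2_eq_pdM2_pdM1 (hG : ∀ i j, ContDiff ℂ 2 fun q => G q i j) (p : ℂ × ℂ) :
    pdM1 (pdM2 G) p = pdM2 (pdM1 G) p :=
  ext fun i j => pd1_pd2_eq_pd2_pd1 (hG i j) p

end MatrixPartialDerivatives

section Ernst

variable {r : ℕ} {G : ℂ × ℂ → Matrix (Fin r) (Fin r) ℂ} {a b : ℂ}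

theorem hasDerivAt_pdM1_mul_inv_snd (hG : ∀ i j, ContDiff ℂ 2 fun q => G q i j)
    (hGab : IsUnit (G (a, b))) :
    HasDerivAt (fun y => pdM1 G (a, y) * (G (a, y))⁻¹)
      (pdM2 (pdM1 G) (a, b) * (G (a, b))⁻¹
        - pdM1 G (a, b) * (G (a, b))⁻¹ * (pdM2 G (a, b) * (G (a, b))⁻¹)) b :=
  (hasDerivAt_pdM2 fun i j => ((hG i j).pd1.differentiable one_ne_zero) _).matrix_mul_inv
    (hasDerivAt_pdM2 fun i j => ((hG i j).differentiable two_ne_zero) _) hGab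

theorem hasDerivAt_pdM2_mul_inv_fst (hG : ∀ i j, ContDiff ℂ 2 fun q => G q i j)
    (hGab : IsUnit (G (a, b))) :
    HasDerivAt (fun x => pdM2 G (x, b) * (G (x, b))⁻¹)
      (pdM2 (pdM1 G) (a, b) * (G (a, b))⁻¹
        - pdM2 G (a, b) * (G (a, b))⁻¹ * (pdM1 G (a, b) * (G (a, b))⁻¹)) a := by
  rw [← pdM1_pdM2_eq_pdM2_pdM1 hG]
  exact (hasDerivAt_pdM1 fun i j => ((hG i j).pd2.differentiable one_ne_zero) _).matrix_mul_inv
    (hasDerivAt_pdM1 fun i j => ((hG i j).differentiable two_ne_zero) _) hGab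

theorem smul_add_eq_sub_of_ernst {A' B' : Matrix (Fin r) (Fin r) ℂ}
    (hE : pdM2 (fun q => (q.1 - q.2) • (pdM1 G q * (G q)⁻¹)) (a, b)
      + pdM1 (fun q => (q.1 - q.2) • (pdM2 G q * (G q)⁻¹)) (a, b) = 0)
    (hA : HasDerivAt (fun y => pdM1 G (a, y) * (G (a, y))⁻¹) A' b)
    (hB : HasDerivAt (fun x => pdM2 G (x, b) * (G (x, b))⁻¹) B' a) :
    (a - b) • (A' + B') = pdM1 G (a, b) * (G (a, b))⁻¹ - pdM2 G (a, b) * (G (a, b))⁻¹ := by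
  rw [pdM2_eq_of_hasDerivAt (G := fun q => (q.1 - q.2) • (pdM1 G q * (G q)⁻¹))
      (((hasDerivAt_id' b).const_sub a).smul hA),
    pdM1_eq_of_hasDerivAt (G := fun q => (q.1 - q.2) • (pdM2 G q * (G q)⁻¹))
      (((hasDerivAt_id' a).sub_const b).smul hB)] at hE
  linear_combination (norm := module) hE

end Ernst

theorem stmt7_general {r : ℕ} (G : ℂ × ℂ → Matrix (Fin r) (Fin r) ℂ)
    (hsm : ∀ i j, ContDiff ℂ 2 fun q => G q i j)
    (hinv : ∀ q, IsUnit (G q))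
    (hErnst : ∀ q : ℂ × ℂ,
      pdM2 (fun q' => (q'.1 - q'.2) • (pdM1 G q' * (G q')⁻¹)) q
        + pdM1 (fun q' => (q'.1 - q'.2) • (pdM2 G q' * (G q')⁻¹)) q = 0)
    (p : ℂ × ℂ) :
    pd2 (fun q => (q.1 - q.2) / 4 * Matrix.trace ((pdM1 G q * (G q)⁻¹) ^ 2)) p
      = pd1 (fun q => (q.2 - q.1) / 4 * Matrix.trace ((pdM2 G q * (G q)⁻¹) ^ 2)) p := by
  obtain ⟨a, b⟩ := p
  have hA := hasDerivAt_pdM1_mul_inv_snd hsm (hinv (a, b))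
  have hB := hasDerivAt_pdM2_mul_inv_fst hsm (hinv (a, b))
  have hE := smul_add_eq_sub_of_ernst (hErnst (a, b)) hA hB
  have hL := (((hasDerivAt_id' b).const_sub a).div_const 4).fun_mul hA.matrix_trace_sq
  have hR := (((hasDerivAt_id' a).const_sub b).div_const 4).fun_mul hB.matrix_trace_sq
  refine hL.deriv.trans (Eq.trans ?_ hR.deriv.symm)
  linear_combination (-1 / 4 : ℂ) * trace_sq_sub_trace_sq_of_smul_eq hE

/-- If the smooth invertible matrix function `G(ξ,ξ̄)` satisfies the Ernst
equation `((ξ-ξ̄)G_ξG⁻¹)_{ξ̄} + ((ξ-ξ̄)G_{ξ̄}G⁻¹)_ξ = 0`, then the 1-form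
`q = ((ξ-ξ̄)/4)tr(G_ξG⁻¹)² dξ + ((ξ̄-ξ)/4)tr(G_{ξ̄}G⁻¹)² dξ̄` is closed. -/
theorem stmt7 {r : ℕ} (G : ℂ × ℂ → Matrix (Fin r) (Fin r) ℂ)
    (hsm : ∀ i j, ContDiff ℂ 2 fun q => G q i j)
    (hinv : ∀ q, IsUnit (G q))
    (hErnst : ∀ q : ℂ × ℂ,
      pdM2 (fun q' => (q'.1 - q'.2) • (pdM1 G q' * (G q')⁻¹)) q
        + pdM1 (fun q' => (q'.1 - q'.2) • (pdM2 G q' * (G q')⁻¹)) q = 0)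
    (p : ℂ × ℂ) (hp : p.1 ≠ p.2) :
    pd2 (fun q => (q.1 - q.2) / 4 * Matrix.trace ((pdM1 G q * (G q)⁻¹) ^ 2)) p
      = pd1 (fun q => (q.2 - q.1) / 4 * Matrix.trace ((pdM2 G q * (G q)⁻¹) ^ 2)) p :=
  stmt7_general G hsm hinv hErnst p
end

section
/- Suppose functions f(λ₁,…,λ_M) and v_m(λ₁,…,λ_M) (m = 1,…,M, v_m ≠ 0) satisfy, for all m ≠ n: ∂²f/∂λ_m∂λ_n = (b_{mn}/2)[(v_n/v_m)∂f/∂λ_m + (v_m/v_n)∂f/∂λ_n] and ∂v_n/∂λ_m = (b_{mn}/2) v_m, where b_{mn} = b_{nm}. Then the functions g_m := (∂f/∂λ_m / v_m)² satisfy ∂g_m/∂λ_n = b_{mn} (∂f/∂λ_m)(∂f/∂λ_n)/(v_m v_n) for m ≠ n; in particular ∂g_m/∂λ_n = ∂g_n/∂λ_m, so locally there is a function ln τ with ∂(ln τ)/∂λ_m = g_m. -/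
open Function

theorem HasFDerivAt.hasDerivAt_update {𝕜 ι F : Type*} [NontriviallyNormedField 𝕜] [Fintype ι]
    [DecidableEq ι] [NormedAddCommGroup F] [NormedSpace 𝕜 F] {φ : (ι → 𝕜) → F}
    {L : (ι → 𝕜) →L[𝕜] F} {Λ : ι → 𝕜} (h : HasFDerivAt φ L Λ) (k : ι) :
    HasDerivAt (fun x => φ (update Λ k x)) (L (Pi.single k 1)) (Λ k) := by
  rw [← update_eq_self k Λ] at h
  exact h.comp_hasDerivAt _ (_root_.hasDerivAt_update Λ k (Λ k))

theorem ContinuousLinearMap.apply_eq_sum_smul_single {ι R M : Type*} [Fintype ι] [DecidableEq ι]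
    [Semiring R] [TopologicalSpace R] [AddCommMonoid M] [Module R M] [TopologicalSpace M]
    (L : (ι → R) →L[R] M) (x : ι → R) :
    L x = ∑ n, x n • L (Pi.single n 1) := by
  conv_lhs => rw [← Finset.univ_sum_single x]
  simp only [map_sum]
  refine Finset.sum_congr rfl fun n _ => ?_
  rw [← L.map_smul, ← Pi.single_smul', smul_eq_mul, mul_one]

theorem Convex.exists_hasDerivAt_update_of_fderiv_symm {𝕜 ι : Type*} [RCLike 𝕜] [Fintype ι]
    [DecidableEq ι] {B : Set (ι → 𝕜)} (hBc : Convex ℝ B) (hB : IsOpen B)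
    {g : ι → (ι → 𝕜) → 𝕜} (hg : ∀ m, DifferentiableOn 𝕜 (g m) B)
    (hsymm : ∀ Λ ∈ B, ∀ m n,
      fderiv 𝕜 (g m) Λ (Pi.single n 1) = fderiv 𝕜 (g n) Λ (Pi.single m 1)) :
    ∃ φ : (ι → 𝕜) → 𝕜, ∀ Λ ∈ B, ∀ k, HasDerivAt (fun x => φ (update Λ k x)) (g k Λ) (Λ k) := by
  let e : ι → (ι → 𝕜) →L[𝕜] 𝕜 := ContinuousLinearMap.proj
  let ω : (ι → 𝕜) → (ι → 𝕜) →L[𝕜] 𝕜 := fun Λ => ∑ m, g m Λ • e m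
  let dω : (ι → 𝕜) → (ι → 𝕜) →L[ℝ] (ι → 𝕜) →L[𝕜] 𝕜 := fun Λ =>
    (∑ m, (fderiv 𝕜 (g m) Λ).smulRight (e m)).restrictScalars ℝ
  have hω : ∀ Λ ∈ B, HasFDerivAt ω (dω Λ) Λ := fun Λ hΛ =>
    (HasFDerivAt.fun_sum fun m _ =>
      ((hg m).differentiableAt (hB.mem_nhds hΛ)).hasFDerivAt.smul_const (e m)).restrictScalars ℝ
  have hω_closed : ∀ Λ ∈ B, ∀ x y, dω Λ x y = dω Λ y x := fun Λ hΛ x y => by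
    have hx m := (fderiv 𝕜 (g m) Λ).apply_eq_sum_smul_single x
    have hy m := (fderiv 𝕜 (g m) Λ).apply_eq_sum_smul_single y
    simp only [dω, e, ContinuousLinearMap.coe_restrictScalars', FunLike.coe_sum,
      Finset.sum_apply, ContinuousLinearMap.smulRight_apply, smul_apply,
      ContinuousLinearMap.proj_apply, smul_eq_mul, hx, hy, Finset.sum_mul]
    rw [Finset.sum_comm]
    refine Fintype.sum_congr _ _ fun m => Fintype.sum_congr _ _ fun n => ?_
    rw [hsymm Λ hΛ]
    ring
  obtain ⟨φ, hφ⟩ := hBc.exists_forall_hasFDerivWithinAt_of_hasFDerivWithinAt_symmetric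
    (fun Λ hΛ => (hω Λ hΛ).hasFDerivWithinAt) fun Λ hΛ x _ y _ => hω_closed Λ hΛ x y
  refine ⟨φ, fun Λ hΛ k => ?_⟩
  simpa [ω, e, Pi.single_apply] using ((hφ Λ hΛ).hasFDerivAt (hB.mem_nhds hΛ)).hasDerivAt_update k

theorem hasDerivAt_div_sq_of_pde {𝕜 : Type*} [NontriviallyNormedField 𝕜] [CharZero 𝕜]
    {P U : 𝕜 → 𝕜} {x p u w q β : 𝕜} (hp : P x = p) (hu : U x = u) (hu0 : u ≠ 0) (hw0 : w ≠ 0)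
    (hP : HasDerivAt P (β / 2 * (w / u * p + u / w * q)) x) (hU : HasDerivAt U (β / 2 * w) x) :
    HasDerivAt (fun y => (P y / U y) ^ 2) (β * p * q / (u * w)) x := by
  refine ((hP.fun_div hU (hu ▸ hu0)).pow 2).congr_deriv ?_
  rw [hp, hu, Nat.cast_ofNat, Nat.add_one_sub_one, pow_one]
  field_simp
  ring

/-- If `f`, `v_m ≠ 0` satisfy (m ≠ n)
`∂²f/∂λ_m∂λ_n = (b_{mn}/2)[(v_n/v_m)∂f/∂λ_m + (v_m/v_n)∂f/∂λ_n]` and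
`∂v_n/∂λ_m = (b_{mn}/2)v_m` with symmetric `b_{mn}`, then
`g_m := (∂f/∂λ_m / v_m)²` satisfies `∂g_m/∂λ_n = b_{mn}(∂f/∂λ_m)(∂f/∂λ_n)/(v_m v_n)`;
in particular the mixed derivatives are symmetric and locally there is a function
`ln τ` with `∂(ln τ)/∂λ_m = g_m`. -/
theorem stmt14 {M : ℕ} (B : Set (Fin M → ℂ)) (hB : IsOpen B) (hBc : Convex ℝ B)
    (f : (Fin M → ℂ) → ℂ) (v : Fin M → (Fin M → ℂ) → ℂ)
    (b : Fin M → Fin M → (Fin M → ℂ) → ℂ)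
    (hbsym : ∀ (m n : Fin M) (Λ : Fin M → ℂ), b m n Λ = b n m Λ)
    (hv0 : ∀ m, ∀ Λ ∈ B, v m Λ ≠ 0)
    (hreg1 : ∀ m : Fin M, DifferentiableOn ℂ (fun Λ => pcoord m f Λ) B)
    (hreg2 : ∀ m : Fin M, DifferentiableOn ℂ (v m) B)
    (hPDE : ∀ Λ ∈ B, ∀ m n : Fin M, m ≠ n →
      HasDerivAt (fun x => pcoord m f (Function.update Λ n x))
        ((b m n Λ / 2) * ((v n Λ / v m Λ) * pcoord m f Λ
          + (v m Λ / v n Λ) * pcoord n f Λ)) (Λ n))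
    (hvar : ∀ Λ ∈ B, ∀ m n : Fin M, m ≠ n →
      HasDerivAt (fun x => v n (Function.update Λ m x)) ((b m n Λ / 2) * v m Λ) (Λ m)) :
    (∀ Λ ∈ B, ∀ m n : Fin M, m ≠ n →
      HasDerivAt (fun x =>
          (pcoord m f (Function.update Λ n x) / v m (Function.update Λ n x)) ^ 2)
        (b m n Λ * pcoord m f Λ * pcoord n f Λ / (v m Λ * v n Λ)) (Λ n)) ∧
    ∃ logτ : (Fin M → ℂ) → ℂ, ∀ Λ ∈ B, ∀ m : Fin M,
      HasDerivAt (fun x => logτ (Function.update Λ m x))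
        ((pcoord m f Λ / v m Λ) ^ 2) (Λ m) := by
  have hpartial : ∀ Λ ∈ B, ∀ m n : Fin M, m ≠ n →
      HasDerivAt (fun x =>
          (pcoord m f (Function.update Λ n x) / v m (Function.update Λ n x)) ^ 2)
        (b m n Λ * pcoord m f Λ * pcoord n f Λ / (v m Λ * v n Λ)) (Λ n) :=
    fun Λ hΛ m n hmn => hasDerivAt_div_sq_of_pde (by rw [update_eq_self])
      (by rw [update_eq_self]) (hv0 m Λ hΛ) (hv0 n Λ hΛ) (hPDE Λ hΛ m n hmn)
      (hbsym m n Λ ▸ hvar Λ hΛ n m hmn.symm)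
  have hdiff : ∀ m, DifferentiableOn ℂ (fun Λ => (pcoord m f Λ / v m Λ) ^ 2) B := fun m =>
    ((hreg1 m).mul ((hreg2 m).inv (hv0 m))).pow 2
  refine ⟨hpartial, hBc.exists_hasDerivAt_update_of_fderiv_symm hB hdiff fun Λ hΛ m n => ?_⟩
  obtain rfl | hmn := eq_or_ne m n
  · rfl
  have hfderiv m := ((hdiff m).differentiableAt (hB.mem_nhds hΛ)).hasFDerivAt
  rw [← (hpartial Λ hΛ m n hmn).unique ((hfderiv m).hasDerivAt_update n),
    ← (hpartial Λ hΛ n m hmn.symm).unique ((hfderiv n).hasDerivAt_update m), hbsym]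
  ring
end
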